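/- Let ħ > 0, e ≠ 0 real, l ∈ ℕ, n ∈ ℕ, set λ = ħ(l + 1/2), and let E ∈ ℝ with E < 0 and e^2/√(-2E) ≥ λ. Set r∓ = (e^2 ∓ √(e^4 + 2Eλ^2))/(-2E). Then (1/ħ) ∫_{r₋}^{r₊} √(2E + 2e^2/r - λ^2/r^2) dr = π (n + 1/2) if and only if E = - e^4 / (2 ħ^2 (n + l + 1)^2). -/

import Mathlib

/-!
With `k = √(-2E)` the radicand factors as `k² (r - r₋) (r₊ - r) / r²`, so the action is
`k ∫ √((r - r₋)(r₊ - r)) / r dr = k π ((r₋ + r₊)/2 - √(r₋ r₊))`. By Vieta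
`r₋ + r₊ = 2e²/k²` and `r₋ r₊ = λ²/k²`, so the action equals `π (e²/k - λ)`, and the
quantization condition says `e²/k = ħ (n + l + 1)`, which is the Balmer formula.
-/

open Real Set

lemma hasDerivAt_arcsin_of_one_sub_sq_eq {u : ℝ → ℝ} {u' q x : ℝ} (hu : HasDerivAt u u' x)
    (hq : 0 < q) (hq2 : 1 - u x ^ 2 = q ^ 2) :
    HasDerivAt (fun y => arcsin (u y)) (u' / q) x := by
  have hu1 : u x ≠ -1 := fun h => by rw [h] at hq2; nlinarith
  have hu2 : u x ≠ 1 := fun h => by rw [h] at hq2; nlinarith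
  have h := (hasDerivAt_arcsin hu1 hu2).comp x hu
  rwa [hq2, sqrt_sq hq.le, one_div_mul_eq_div] at h

section RadialIntegral

variable {a b x : ℝ}

lemma hasDerivAt_sqrt_sub_mul_sub (hx : x ∈ Ioo a b) :
    HasDerivAt (fun y => √((y - a) * (b - y)))
      ((a + b - 2 * x) / (2 * √((x - a) * (b - x)))) x := by
  have hpos : 0 < (x - a) * (b - x) := mul_pos (sub_pos.2 hx.1) (sub_pos.2 hx.2)
  have h : HasDerivAt (fun y => (y - a) * (b - y)) (a + b - 2 * x) x := by
    refine (((hasDerivAt_id' x).sub_const a).fun_mul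
      ((hasDerivAt_const x b).fun_sub (hasDerivAt_id' x))).congr_deriv ?_
    ring
  exact h.sqrt hpos.ne'

lemma hasDerivAt_arcsin_affine (hx : x ∈ Ioo a b) :
    HasDerivAt (fun y => arcsin ((2 * y - a - b) / (b - a)))
      (1 / √((x - a) * (b - x))) x := by
  have hba : 0 < b - a := sub_pos.2 (hx.1.trans hx.2)
  have hpos : 0 < (x - a) * (b - x) := mul_pos (sub_pos.2 hx.1) (sub_pos.2 hx.2)
  have hS := sq_sqrt hpos.le
  have hu : HasDerivAt (fun y => (2 * y - a - b) / (b - a)) (2 / (b - a)) x := by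
    simpa using ((((hasDerivAt_id x).const_mul 2).sub_const a).sub_const b).div_const (b - a)
  convert hasDerivAt_arcsin_of_one_sub_sq_eq hu (q := 2 * √((x - a) * (b - x)) / (b - a))
    (by positivity) ?_ using 1
  · field_simp
  · field_simp
    linear_combination (-4) * hS

lemma hasDerivAt_arcsin_affine_inv (ha : 0 < a) (hx : x ∈ Ioo a b) :
    HasDerivAt (fun y => arcsin ((a + b) / (b - a) - 2 * a * b / ((b - a) * y)))
      (√(a * b) / (x * √((x - a) * (b - x)))) x := by
  have hb : 0 < b := ha.trans (hx.1.trans hx.2)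
  have hx0 : 0 < x := ha.trans hx.1
  have hba : 0 < b - a := sub_pos.2 (hx.1.trans hx.2)
  have hpos : 0 < (x - a) * (b - x) := mul_pos (sub_pos.2 hx.1) (sub_pos.2 hx.2)
  have hS := sq_sqrt hpos.le
  have hT := sq_sqrt (mul_pos ha hb).le
  have hu : HasDerivAt (fun y => (a + b) / (b - a) - 2 * a * b / ((b - a) * y))
      (2 * a * b / ((b - a) * x ^ 2)) x := by
    refine (((hasDerivAt_const x (2 * a * b)).fun_div ((hasDerivAt_id' x).const_mul (b - a))
      (by positivity)).const_sub ((a + b) / (b - a))).congr_deriv ?_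
    field_simp
    ring
  convert hasDerivAt_arcsin_of_one_sub_sq_eq hu
    (q := 2 * √(a * b) * √((x - a) * (b - x)) / ((b - a) * x)) (by positivity) ?_ using 1
  · field_simp
    rw [hT]
  · field_simp
    rw [hT, hS]
    ring

/-- Both arcsine arguments run from `-1` at `x = a` to `1` at `x = b`, which produces the `π`
in `integral_sqrt_sub_mul_sub_div_self`. -/
noncomputable def radialActionPrimitive (a b x : ℝ) : ℝ :=
  √((x - a) * (b - x)) + (a + b) / 2 * arcsin ((2 * x - a - b) / (b - a))
    - √(a * b) * arcsin ((a + b) / (b - a) - 2 * a * b / ((b - a) * x))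

lemma hasDerivAt_radialActionPrimitive (ha : 0 < a) (hx : x ∈ Ioo a b) :
    HasDerivAt (radialActionPrimitive a b) (√((x - a) * (b - x)) / x) x := by
  have hx0 : 0 < x := ha.trans hx.1
  have hpos : 0 < (x - a) * (b - x) := mul_pos (sub_pos.2 hx.1) (sub_pos.2 hx.2)
  have hS := sq_sqrt hpos.le
  have hT := sq_sqrt (mul_pos ha (ha.trans (hx.1.trans hx.2))).le
  refine (((hasDerivAt_sqrt_sub_mul_sub hx).add
    ((hasDerivAt_arcsin_affine hx).const_mul ((a + b) / 2))).sub
    ((hasDerivAt_arcsin_affine_inv ha hx).const_mul √(a * b))).congr_deriv ?_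
  have : √((x - a) * (b - x)) ≠ 0 := (sqrt_pos.2 hpos).ne'
  field_simp
  rw [hT]
  linear_combination (-2) * hS

lemma integral_sqrt_sub_mul_sub_div_self (ha : 0 < a) (hab : a ≤ b) :
    ∫ x in a..b, √((x - a) * (b - x)) / x = π * ((a + b) / 2 - √(a * b)) := by
  rcases hab.eq_or_lt with rfl | hlt
  · rw [intervalIntegral.integral_same, sqrt_mul_self ha.le]
    ring
  have hb : 0 < b := ha.trans hlt
  have hba : 0 < b - a := sub_pos.2 hlt
  have hpos : ∀ x ∈ Icc a b, x ≠ 0 := fun x hx => (ha.trans_le hx.1).ne'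
  have hcont : ContinuousOn (radialActionPrimitive a b) (Icc a b) := by
    have hu : ContinuousOn (fun x => (a + b) / (b - a) - 2 * a * b / ((b - a) * x))
        (Icc a b) := by
      fun_prop (disch := exact fun x hx => mul_ne_zero hba.ne' (hpos x hx))
    exact ((Continuous.continuousOn (by fun_prop)).add (continuousOn_const.mul
      (continuous_arcsin.comp (by fun_prop)).continuousOn)).sub
      (continuousOn_const.mul (continuous_arcsin.comp_continuousOn hu))
  have hint : IntervalIntegrable (fun x => √((x - a) * (b - x)) / x) MeasureTheory.volume a b := by
    refine ContinuousOn.intervalIntegrable ?_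
    rw [uIcc_of_le hab]
    fun_prop (disch := exact hpos)
  rw [intervalIntegral.integral_eq_sub_of_hasDerivAt_of_le hab hcont
    (fun x hx => hasDerivAt_radialActionPrimitive ha hx) hint]
  have h1 : (2 * b - a - b) / (b - a) = 1 := by field_simp; ring
  have h2 : (2 * a - a - b) / (b - a) = -1 := by field_simp; ring
  have h3 : (a + b) / (b - a) - 2 * a * b / ((b - a) * b) = 1 := by field_simp; ring
  have h4 : (a + b) / (b - a) - 2 * a * b / ((b - a) * a) = -1 := by field_simp; ring
  simp only [radialActionPrimitive, h1, h2, h3, h4, arcsin_one, arcsin_neg_one, sub_self,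
    mul_zero, zero_mul, sqrt_zero]
  ring

end RadialIntegral

section CoulombAction

variable {E c lam rm rp : ℝ}

lemma coulomb_turningPoints_add_mul (hE : E < 0) (hD : 0 ≤ c ^ 2 + 2 * E * lam ^ 2)
    (hrm : rm = (c - √(c ^ 2 + 2 * E * lam ^ 2)) / (-2 * E))
    (hrp : rp = (c + √(c ^ 2 + 2 * E * lam ^ 2)) / (-2 * E)) :
    rm + rp = c / -E ∧ rm * rp = lam ^ 2 / (-2 * E) := by
  have hs := sq_sqrt hD
  have hE0 : E ≠ 0 := hE.ne
  subst hrm hrp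
  constructor
  · field_simp
    ring
  · field_simp
    linear_combination (-1) * hs

lemma coulomb_integrand_eq (hE : E ≠ 0) (hsum : rm + rp = c / -E)
    (hprod : rm * rp = lam ^ 2 / (-2 * E)) {r : ℝ} (hr : r ≠ 0) :
    2 * E + 2 * c / r - lam ^ 2 / r ^ 2 = -2 * E * ((r - rm) * (rp - r)) / r ^ 2 := by
  have hexp : (r - rm) * (rp - r) = -r ^ 2 + (rm + rp) * r - rm * rp := by ring
  rw [hexp, hsum, hprod]
  field_simp
  ring

theorem integral_sqrt_coulomb_eq (hE : E < 0) (hlam : 0 < lam) (hc : lam ≤ c / √(-2 * E))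
    (hrm : rm = (c - √(c ^ 2 + 2 * E * lam ^ 2)) / (-2 * E))
    (hrp : rp = (c + √(c ^ 2 + 2 * E * lam ^ 2)) / (-2 * E)) :
    ∫ r in rm..rp, √(2 * E + 2 * c / r - lam ^ 2 / r ^ 2) = π * (c / √(-2 * E) - lam) := by
  set k := √(-2 * E)
  have hk : 0 < k := sqrt_pos.2 (by linarith)
  have hk2 : k ^ 2 = -2 * E := sq_sqrt (by linarith)
  have hlamk : lam * k ≤ c := (le_div_iff₀ hk).1 hc
  have hD : 0 ≤ c ^ 2 + 2 * E * lam ^ 2 := by nlinarith [mul_pos hlam hk]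
  have hs := sq_sqrt hD
  have hs0 := sqrt_nonneg (c ^ 2 + 2 * E * lam ^ 2)
  have hslt : √(c ^ 2 + 2 * E * lam ^ 2) < c := by nlinarith [mul_pos hlam hk]
  have hrm0 : 0 < rm := by rw [hrm]; exact div_pos (by linarith) (by linarith)
  have hrmp : rm ≤ rp := by
    rw [hrm, hrp]
    exact div_le_div_of_nonneg_right (by linarith) (by linarith)
  obtain ⟨hsum, hprod⟩ := coulomb_turningPoints_add_mul hE hD hrm hrp
  have hsum' : rm + rp = 2 * c / k ^ 2 := by rw [hsum, hk2]; ring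
  have hcongr : EqOn (fun r => √(2 * E + 2 * c / r - lam ^ 2 / r ^ 2))
      (fun r => k * (√((r - rm) * (rp - r)) / r)) (uIcc rm rp) := by
    intro r hr
    rw [uIcc_of_le hrmp] at hr
    have hr0 : 0 < r := hrm0.trans_le hr.1
    have hP : 0 ≤ (r - rm) * (rp - r) := mul_nonneg (by linarith [hr.1]) (by linarith [hr.2])
    have hsq : k ^ 2 * ((r - rm) * (rp - r)) / r ^ 2
        = (k * (√((r - rm) * (rp - r)) / r)) ^ 2 := by
      rw [mul_pow, div_pow, sq_sqrt hP, mul_div_assoc]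
    show √_ = _
    rw [coulomb_integrand_eq hE.ne hsum hprod hr0.ne', ← hk2, hsq, sqrt_sq (by positivity)]
  have hsqrt : √(rm * rp) = lam / k := by
    rw [hprod, ← hk2, ← div_pow, sqrt_sq (by positivity)]
  rw [intervalIntegral.integral_congr hcongr, intervalIntegral.integral_const_mul,
    integral_sqrt_sub_mul_sub_div_self hrm0 hrmp, hsum', hsqrt]
  field_simp

lemma div_sqrt_neg_two_mul_eq_iff {m : ℝ} (hE : E < 0) (hc : 0 ≤ c) (hm : 0 < m) :
    c / √(-2 * E) = m ↔ E = -c ^ 2 / (2 * m ^ 2) := by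
  have hk : 0 < √(-2 * E) := sqrt_pos.2 (by linarith)
  rw [div_eq_iff hk.ne', eq_comm, mul_comm, ← eq_div_iff hm.ne',
    sqrt_eq_iff_eq_sq (by linarith) (by positivity), div_pow,
    show -c ^ 2 / (2 * m ^ 2) = -(c ^ 2 / m ^ 2) / 2 by ring]
  constructor <;> intro h <;> linarith

end CoulombAction

theorem coulomb_quantization_general (hbar e : ℝ) (hhbar : 0 < hbar) (l n : ℕ)
    (lam E rm rp : ℝ) (hlam : lam = hbar * (l + 1 / 2))
    (hE : E < 0) (hE' : lam ≤ e ^ 2 / Real.sqrt (-2 * E))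
    (hrm : rm = (e ^ 2 - Real.sqrt (e ^ 4 + 2 * E * lam ^ 2)) / (-2 * E))
    (hrp : rp = (e ^ 2 + Real.sqrt (e ^ 4 + 2 * E * lam ^ 2)) / (-2 * E)) :
    (1 / hbar) * ∫ r in rm..rp, Real.sqrt (2 * E + 2 * e ^ 2 / r - lam ^ 2 / r ^ 2) =
        Real.pi * (n + 1 / 2) ↔
      E = -e ^ 4 / (2 * hbar ^ 2 * (n + l + 1) ^ 2) := by
  have he4 : e ^ 4 = (e ^ 2) ^ 2 := by ring
  rw [he4] at hrm hrp
  have hlam0 : 0 < lam := by rw [hlam]; positivity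
  have hN : 0 < hbar * (n + l + 1) := by positivity
  rw [integral_sqrt_coulomb_eq hE hlam0 hE' hrm hrp, he4,
    show -(e ^ 2) ^ 2 / (2 * hbar ^ 2 * (n + l + 1) ^ 2)
      = -(e ^ 2) ^ 2 / (2 * (hbar * (n + l + 1)) ^ 2) by ring,
    ← div_sqrt_neg_two_mul_eq_iff hE (sq_nonneg e) hN, one_div_mul_eq_div,
    div_eq_iff hhbar.ne', mul_assoc, mul_right_inj' pi_ne_zero, hlam]
  constructor <;> intro h <;> linarith

/-- Exact-WKB (Bohr–Sommerfeld with Maslov phases) quantization for the radial Coulomb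
problem `V(r) = -e²/r` with angular momentum `l`: for `hbar > 0`, `e ≠ 0`,
`λ = hbar(l + 1/2)`, `E < 0`, `e²/√(-2E) ≥ λ`, and turning points
`r∓ = (e² ∓ √(e⁴ + 2Eλ²))/(-2E)`, the condition
`(1/hbar) ∫_{r₋}^{r₊} √(2E + 2e²/r - λ²/r²) dr = π(n + 1/2)` holds if and only if
`E = -e⁴/(2hbar²(n + l + 1)²)`. -/
theorem coulomb_quantization (hbar e : ℝ) (hhbar : 0 < hbar) (he : e ≠ 0) (l n : ℕ)
    (lam E rm rp : ℝ) (hlam : lam = hbar * (l + 1 / 2))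
    (hE : E < 0) (hE' : lam ≤ e ^ 2 / Real.sqrt (-2 * E))
    (hrm : rm = (e ^ 2 - Real.sqrt (e ^ 4 + 2 * E * lam ^ 2)) / (-2 * E))
    (hrp : rp = (e ^ 2 + Real.sqrt (e ^ 4 + 2 * E * lam ^ 2)) / (-2 * E)) :
    (1 / hbar) * ∫ r in rm..rp, Real.sqrt (2 * E + 2 * e ^ 2 / r - lam ^ 2 / r ^ 2) =
        Real.pi * (n + 1 / 2) ↔
      E = -e ^ 4 / (2 * hbar ^ 2 * (n + l + 1) ^ 2) :=
  coulomb_quantization_general hbar e hhbar l n lam E rm rp hlam hE hE' hrm hrp
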